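/- Schur's Pfaffian identity: for an even number of variables y_1,...,y_k (k even), Pf( ((y_i − y_j)/(y_i + y_j))_{1≤i,j≤k} ) = ∏_{1≤i<j≤k} (y_i − y_j)/(y_i + y_j). -/

import Mathlib

def pf {R : Type*} [CommRing R] : (m : ℕ) → Matrix (Fin (2*m)) (Fin (2*m)) R → R
  | 0, _ => 1
  | (m+1), M =>
      ∑ j : Fin (2*m+1), (-1)^(j : ℕ) * M 0 j.succ *
        pf m (M.submatrix (fun i => (j.succAbove i).succ) (fun i => (j.succAbove i).succ))

/-!
Expanding the Pfaffian along its first row, Schur's identity for the variables `t, z₀, …, z₂ₘ`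
follows from the one for `2m` variables and the polynomial identity
  `∏ⱼ (t - zⱼ) · V(z) = ∑ⱼ (-1)ʲ ∏_{i≠j} (zⱼ + zᵢ) · V(z \ zⱼ) · (t - zⱼ) ∏_{i≠j} (t + zᵢ)`,
where `V(z) = ∏_{i<k} (zᵢ - zₖ)`. The difference of the two sides is a polynomial in `t` of degree
at most `2m + 1` vanishing at every `t = -zₗ` (only the `j = l` term survives there), so for distinct
`zⱼ` it is `c · ∏ⱼ (t + zⱼ)`. Since the number of `zⱼ` is odd, its value at `t = 0` is `-c ∏ⱼ zⱼ`,
whence `2c ∏ⱼ zⱼ = 0` and `c = 0`. Specializing generic variables over `ℤ` gives the identity in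
every commutative ring.
-/

open Finset Polynomial

section PairProd

variable {α M : Type*} [CommMonoid M]

def pairProd {n : ℕ} (f : α → α → M) (z : Fin n → α) : M :=
  ∏ i, ∏ k ∈ Ioi i, f (z i) (z k)

theorem pairProd_succ {n : ℕ} (f : α → α → M) (z : Fin (n + 1) → α) :
    pairProd f z = (∏ l : Fin n, f (z 0) (z l.succ)) * pairProd f (fun i => z i.succ) := by
  rw [pairProd, Fin.prod_univ_succ, Fin.prod_Ioi_zero]
  simp only [Fin.prod_Ioi_succ, pairProd]

theorem pairProd_succAbove (ε : M) (f : α → α → M) (hf : ∀ a b, f a b = ε * f b a) :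
    ∀ {n : ℕ} (z : Fin (n + 1) → α) (j : Fin (n + 1)),
    pairProd f z = ε ^ (j : ℕ) * (∏ i, f (z j) (z (j.succAbove i))) *
      pairProd f (fun i => z (j.succAbove i))
  | 0, z, j => by simp [Fin.fin_one_eq_zero j, pairProd]
  | n + 1, z, j => by
    cases j using Fin.cases with
    | zero => simpa using pairProd_succ f z
    | succ j =>
      rw [pairProd_succ, pairProd_succAbove ε f hf (fun i => z i.succ) j,
        Fin.prod_univ_succAbove (fun l => f (z 0) (z l.succ)) j,
        Fin.prod_univ_succ (fun i => f (z j.succ) (z (j.succ.succAbove i))),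
        pairProd_succ f (fun i => z (j.succ.succAbove i))]
      simp only [Fin.succ_succAbove_zero, Fin.succ_succAbove_succ, Fin.val_succ]
      rw [hf (z 0) (z j.succ), pow_succ]
      ac_rfl

theorem pairProd_ne_zero {M₀ : Type*} [CommMonoidWithZero M₀] [NoZeroDivisors M₀] [Nontrivial M₀]
    {n : ℕ} (f : α → α → M₀) (z : Fin n → α) (h : ∀ i k, f (z i) (z k) ≠ 0) :
    pairProd f z ≠ 0 :=
  prod_ne_zero_iff.mpr fun i _ => prod_ne_zero_iff.mpr fun k _ => h i k

theorem pairProd_div {K : Type*} [DivisionCommMonoid K] {n : ℕ} (f g : α → α → K)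
    (z : Fin n → α) :
    pairProd (fun a b => f a b / g a b) z = pairProd f z / pairProd g z := by
  simp only [pairProd, prod_div_distrib]

end PairProd

theorem Fin.prod_neg_of_even {M : Type*} [CommMonoid M] [HasDistribNeg M] {m : ℕ}
    (f : Fin (2 * m) → M) : ∏ i, -f i = ∏ i, f i := by
  rw [prod_neg, card_univ, Fintype.card_fin, pow_mul, neg_one_sq, one_pow, one_mul]

theorem Fin.prod_neg_of_odd {M : Type*} [CommMonoid M] [HasDistribNeg M] {m : ℕ}
    (f : Fin (2 * m + 1) → M) : ∏ i, -f i = -∏ i, f i := by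
  rw [prod_neg, card_univ, Fintype.card_fin, pow_succ, pow_mul, neg_one_sq, one_pow, one_mul,
    neg_one_mul]

theorem Polynomial.degree_sub_lt_of_monic {R : Type*} [CommRing R] [Nontrivial R] {p q : R[X]}
    {n : ℕ} (hp : p.Monic) (hq : q.Monic) (hpn : p.natDegree = n) (hqn : q.natDegree = n) :
    (p - q).degree < n := by
  have hdeg : p.degree = n := by rw [degree_eq_natDegree hp.ne_zero, hpn]
  refine hdeg ▸ degree_sub_lt_left ?_ hp.ne_zero (by rw [hp.leadingCoeff, hq.leadingCoeff])
  rw [hdeg, degree_eq_natDegree hq.ne_zero, hqn]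

theorem Polynomial.natDegree_prod_X_add_C {R : Type*} [CommRing R] [Nontrivial R] {ι : Type*}
    (s : Finset ι) (u : ι → R) :
    (∏ i ∈ s, (X + C (u i))).natDegree = #s := by
  simp [natDegree_prod_of_monic _ _ fun i _ => monic_X_add_C (u i)]

namespace Schur

variable {R : Type*} [CommRing R] {m : ℕ}

noncomputable def weight (z : Fin (2 * m + 1) → R) (j : Fin (2 * m + 1)) : R :=
  (-1) ^ (j : ℕ) * (∏ i, (z j + z (j.succAbove i))) * pairProd (· - ·) (fun i => z (j.succAbove i))

noncomputable def termPoly (z : Fin (2 * m + 1) → R) (j : Fin (2 * m + 1)) : R[X] :=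
  (X - C (z j)) * ∏ i, (X + C (z (j.succAbove i)))

noncomputable def defect (z : Fin (2 * m + 1) → R) : R[X] :=
  ∑ j, C (weight z j) * termPoly z j - C (pairProd (· - ·) z) * ∏ j, (X - C (z j))

theorem eval_defect (z : Fin (2 * m + 1) → R) (t : R) :
    (defect z).eval t = ∑ j, weight z j * ((t - z j) * ∏ i, (t + z (j.succAbove i))) -
      pairProd (· - ·) z * ∏ j, (t - z j) := by
  simp only [defect, termPoly, eval_sub, eval_finsetSum, eval_mul, eval_C, eval_prod, eval_X,
    eval_add]

theorem eval_termPoly_neg_of_ne (z : Fin (2 * m + 1) → R) {j l : Fin (2 * m + 1)} (h : j ≠ l) :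
    (termPoly z j).eval (-z l) = 0 := by
  obtain ⟨i, hi⟩ := Fin.exists_succAbove_eq (Ne.symm h)
  simp only [termPoly, eval_mul, eval_prod, eval_add, eval_X, eval_C]
  exact mul_eq_zero_of_right _ (prod_eq_zero (mem_univ i) (by rw [hi, neg_add_cancel]))

theorem eval_defect_neg (z : Fin (2 * m + 1) → R) (l : Fin (2 * m + 1)) :
    (defect z).eval (-z l) = 0 := by
  have hsub : ∏ i, (-z l + z (l.succAbove i)) = ∏ i, (z l - z (l.succAbove i)) := by
    rw [← Fin.prod_neg_of_even (fun i => z l - z (l.succAbove i))]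
    simp only [neg_sub, neg_add_eq_sub]
  have hadd : ∏ i, (-z l - z (l.succAbove i)) = ∏ i, (z l + z (l.succAbove i)) := by
    rw [← Fin.prod_neg_of_even (fun i => z l + z (l.succAbove i))]
    simp only [neg_add']
  rw [defect, eval_sub, eval_finsetSum,
    sum_eq_single l (fun j _ hj => by rw [eval_mul, eval_termPoly_neg_of_ne z hj, mul_zero])
      (by simp)]
  simp only [termPoly, weight, eval_mul, eval_C, eval_prod, eval_sub, eval_add, eval_X]
  rw [Fin.prod_univ_succAbove (fun j => -z l - z j) l, hsub, hadd,
    pairProd_succAbove (-1) (· - ·) (fun a b => by ring) z l]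
  ring

theorem eval_defect_zero (z : Fin (2 * m + 1) → R) :
    (defect z).eval 0 = -((∑ j, weight z j - pairProd (· - ·) z) * ∏ j, z j) := by
  have hterm : ∀ j, (0 - z j) * ∏ i, (0 + z (j.succAbove i)) = -∏ j, z j := fun j => by
    rw [zero_sub, neg_mul, Fin.prod_univ_succAbove z j]
    simp only [zero_add]
  rw [eval_defect]
  simp only [hterm]
  simp only [zero_sub, Fin.prod_neg_of_odd]
  rw [← Finset.sum_mul]
  ring

theorem defect_sub_mem_degreeLT [Nontrivial R] (z : Fin (2 * m + 1) → R) :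
    defect z - C (∑ j, weight z j - pairProd (· - ·) z) * ∏ j, (X + C (z j)) ∈
      degreeLT R (2 * m + 1) := by
  set D : R[X] := ∏ j, (X + C (z j))
  have hdeg : ∀ p : R[X], p.Monic → p.natDegree = 2 * m + 1 → p - D ∈ degreeLT R (2 * m + 1) :=
    fun p hp hpn => mem_degreeLT.mpr (degree_sub_lt_of_monic hp
      (monic_prod_of_monic _ _ fun j _ => monic_X_add_C _) hpn
      (by simp [D, natDegree_prod_X_add_C]))
  have hterm : ∀ j, termPoly z j - D ∈ degreeLT R (2 * m + 1) := fun j => by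
    have hq : (∏ i, (X + C (z (j.succAbove i)))).Monic :=
      monic_prod_of_monic _ _ fun i _ => monic_X_add_C _
    refine hdeg _ ((monic_X_sub_C _).mul hq) ?_
    rw [termPoly, (monic_X_sub_C _).natDegree_mul hq, natDegree_X_sub_C, natDegree_prod_X_add_C,
      card_univ, Fintype.card_fin, add_comm]
  have hsplit : defect z - C (∑ j, weight z j - pairProd (· - ·) z) * D =
      ∑ j, weight z j • (termPoly z j - D) - pairProd (· - ·) z • (∏ j, (X - C (z j)) - D) := by
    simp only [defect, smul_eq_C_mul, map_sub, map_sum, mul_sub, sub_mul, sum_sub_distrib,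
      Finset.sum_mul]
    ring
  rw [hsplit]
  exact Submodule.sub_mem _ (Submodule.sum_mem _ fun j _ => Submodule.smul_mem _ _ (hterm j))
    (Submodule.smul_mem _ _
      (hdeg _ (monic_prod_of_monic _ _ fun j _ => monic_X_sub_C _) (by simp)))

theorem defect_eq_zero [IsDomain R] (h2 : (2 : R) ≠ 0) (z : Fin (2 * m + 1) → R)
    (hz : Function.Injective z) (hz0 : ∀ j, z j ≠ 0) : defect z = 0 := by
  set c := ∑ j, weight z j - pairProd (· - ·) z
  have hD : defect z = C c * ∏ j, (X + C (z j)) := by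
    refine eq_of_degree_sub_lt_of_eval_index_eq univ (v := fun l => -z l)
      (neg_injective.comp hz).injOn ?_ fun l _ => ?_
    · rw [card_univ, Fintype.card_fin, ← mem_degreeLT]
      exact defect_sub_mem_degreeLT z
    · rw [eval_defect_neg, eval_mul, eval_prod, prod_eq_zero (mem_univ l) (by simp), mul_zero]
  have hc : (2 * ∏ j, z j) * c = 0 := by
    have h0 := congrArg (eval 0) hD
    simp only [eval_defect_zero, eval_mul, eval_C, eval_prod, eval_add, eval_X, zero_add] at h0
    linear_combination -h0
  have hc0 : c = 0 := (mul_eq_zero.mp hc).resolve_left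
    (mul_ne_zero h2 (prod_ne_zero_iff.mpr fun j _ => hz0 j))
  rw [hD, hc0, C_0, zero_mul]

theorem prod_sub_mul_pairProd_sub (t : R) (z : Fin (2 * m + 1) → R) :
    (∏ j, (t - z j)) * pairProd (· - ·) z =
      ∑ j, weight z j * ((t - z j) * ∏ i, (t + z (j.succAbove i))) := by
  let x : Option (Fin (2 * m + 1)) → MvPolynomial (Option (Fin (2 * m + 1))) ℤ := MvPolynomial.X
  have hgeneric := congrArg (eval (x none)) (defect_eq_zero two_ne_zero (fun j => x (some j))
    ((MvPolynomial.X_injective).comp (Option.some_injective _)) fun j => MvPolynomial.X_ne_zero _)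
  rw [eval_defect, eval_zero, sub_eq_zero] at hgeneric
  have h := congrArg (MvPolynomial.aeval fun o => o.elim t z) hgeneric
  simp only [x, weight, pairProd, map_mul, map_sum, map_prod, map_sub, map_add, map_pow, map_neg,
    map_one, MvPolynomial.aeval_X, Option.elim] at h
  simp only [weight, pairProd]
  linear_combination -h

theorem sum_mul_pairProd_succAbove {F : Type*} [Field F] {m : ℕ} (t : F)
    (z : Fin (2 * m + 1) → F) (ht : ∀ j, t + z j ≠ 0) (hz : ∀ i j, z i + z j ≠ 0) :
    ∑ j : Fin (2 * m + 1), (-1) ^ (j : ℕ) * ((t - z j) / (t + z j)) *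
        pairProd (fun a b => (a - b) / (a + b)) (fun i => z (j.succAbove i)) =
      (∏ j, (t - z j) / (t + z j)) * pairProd (fun a b => (a - b) / (a + b)) z := by
  rw [pairProd_div, prod_div_distrib, div_mul_div_comm, prod_sub_mul_pairProd_sub, sum_div]
  refine sum_congr rfl fun j _ => ?_
  rw [pairProd_div, Fin.prod_univ_succAbove (fun k => t + z k) j,
    pairProd_succAbove 1 (· + ·) (fun a b => by ring) z j, weight]
  have htj := ht j
  have hT : ∏ i, (t + z (j.succAbove i)) ≠ 0 := prod_ne_zero_iff.mpr fun i _ => ht _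
  have hE : ∏ i, (z j + z (j.succAbove i)) ≠ 0 := prod_ne_zero_iff.mpr fun i _ => hz _ _
  have hD : pairProd (· + ·) (fun i => z (j.succAbove i)) ≠ 0 :=
    pairProd_ne_zero _ _ fun i k => hz _ _
  field_simp
  ring

end Schur

/-- Schur's Pfaffian identity:
Pf ((y_i - y_j)/(y_i + y_j))_{i,j} = ∏_{i<j} (y_i - y_j)/(y_i + y_j). -/
theorem schur_pfaffian {F : Type*} [Field F] (m : ℕ) (y : Fin (2*m) → F)
    (hy : ∀ i j, y i + y j ≠ 0) :
    pf m (Matrix.of fun i j => (y i - y j) / (y i + y j))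
      = ∏ i, ∏ j ∈ Finset.Ioi i, (y i - y j) / (y i + y j) := by
  induction m with
  | zero => simp [pf]
  | succ m ih =>
    let q : F → F → F := fun a b => (a - b) / (a + b)
    calc pf (m + 1) (Matrix.of fun i j => (y i - y j) / (y i + y j))
        = ∑ j : Fin (2 * m + 1), (-1) ^ (j : ℕ) * q (y 0) (y j.succ) *
            pairProd q (fun i => y (j.succAbove i).succ) :=
          sum_congr rfl fun j _ => congrArg (_ * ·) (ih _ fun i k => hy _ _)
      _ = (∏ j : Fin (2 * m + 1), q (y 0) (y j.succ)) * pairProd q (fun i => y i.succ) :=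
          Schur.sum_mul_pairProd_succAbove _ _ (fun j => hy _ _) fun i j => hy _ _
      _ = pairProd q y := (pairProd_succ q y).symm
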